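/- For every k ∈ (0, k₀): (a) the function k ↦ √(2ι₁(k)/k) is differentiable at k with derivative −E(k)/((1 − k²)·√(2k³ι₁(k))); (b) the function k ↦ (ι₂(k) + 4k²ι₁(k))/(3(2kι₁(k))^{3/2}) is differentiable at k with derivative ι₃(k)/(2kι₁(k))^{5/2}, where ι₃(k) = (3E(k)² − (5 − 4k²)E(k)K(k) + 2(1 − k²)K(k)²)/(1 − k²). -/

import Mathlib

open Real Set Filter Topology

/-- Complete elliptic integral of the first kind. -/
noncomputable def K (k : ℝ) : ℝ :=
  ∫ t in (0:ℝ)..(π/2), 1 / Real.sqrt (1 - k^2 * Real.sin t ^ 2)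

/-- Complete elliptic integral of the second kind. -/
noncomputable def E (k : ℝ) : ℝ :=
  ∫ t in (0:ℝ)..(π/2), Real.sqrt (1 - k^2 * Real.sin t ^ 2)

noncomputable def ι₁ (k : ℝ) : ℝ := 2 * E k - K k

noncomputable def ι₂ (k : ℝ) : ℝ := K k - E k

noncomputable def ι₃ (k : ℝ) : ℝ :=
  (3 * (E k)^2 - (5 - 4 * k^2) * E k * K k + 2 * (1 - k^2) * (K k)^2) / (1 - k^2)

/-!
Write `Δ = √(1 - k² sin² t)`, so that `E = ∫ Δ` and `K = ∫ 1/Δ` over `[0, π/2]`.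
Differentiating under the integral sign gives `E' = (E - K)/k` and `K' = (∫ Δ⁻³ - K)/k`, and
`∫ Δ⁻³ = E/(1 - k²)` because `k² sin t cos t / Δ`, which vanishes at both ends, is a primitive
of `Δ - (1 - k²) Δ⁻³`. Hence `k ι₁' = ι₁ - E/(1 - k²)` and `ι₂' = k E/(1 - k²)`. Since
`ι₁ ≤ E < E/(1 - k²)`, `ι₁` is strictly decreasing on `(0, 1)`, so it is positive left of its
root `k₀`; there both formulas follow from the chain and quotient rules.
-/

open scoped Interval

theorem hasDerivAt_intervalIntegral_of_continuousOn {G : Type*} [NormedAddCommGroup G]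
    [NormedSpace ℝ G] {F F' : ℝ → ℝ → G} {U : Set ℝ} {a b x₀ : ℝ} (hU : IsOpen U) (hx₀ : x₀ ∈ U)
    (hF : ∀ x ∈ U, ContinuousOn (F x) [[a, b]])
    (hF' : ContinuousOn (Function.uncurry F') (U ×ˢ [[a, b]]))
    (hdiff : ∀ x ∈ U, ∀ t ∈ [[a, b]], HasDerivAt (F · t) (F' x t) x) :
    HasDerivAt (fun x => ∫ t in a..b, F x t) (∫ t in a..b, F' x₀ t) x₀ := by
  obtain ⟨ε, hε, hball⟩ := Metric.nhds_basis_closedBall.mem_iff.1 (hU.mem_nhds hx₀)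
  obtain ⟨C, hC⟩ := ((isCompact_closedBall x₀ ε).prod isCompact_uIcc).exists_bound_of_continuousOn
    (hF'.mono (Set.prod_mono hball subset_rfl))
  have hF'x₀ : ContinuousOn (F' x₀) [[a, b]] :=
    hF'.comp (Continuous.continuousOn (f := fun t => (x₀, t)) (by fun_prop)) fun t ht => ⟨hx₀, ht⟩
  refine (intervalIntegral.hasDerivAt_integral_of_dominated_loc_of_deriv_le (bound := fun _ => C)
    (Metric.ball_mem_nhds x₀ hε) ?_ ((hF x₀ hx₀).intervalIntegrable)
    ((hF'x₀.mono uIoc_subset_uIcc).aestronglyMeasurable measurableSet_uIoc) ?_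
    intervalIntegrable_const ?_).2
  · filter_upwards [hU.mem_nhds hx₀] with x hx
    exact ((hF x hx).mono uIoc_subset_uIcc).aestronglyMeasurable measurableSet_uIoc
  · refine .of_forall fun t ht x hx => hC (x, t) ⟨Metric.ball_subset_closedBall hx, ?_⟩
    exact uIoc_subset_uIcc ht
  · exact .of_forall fun t ht x hx =>
      hdiff x (hball (Metric.ball_subset_closedBall hx)) t (uIoc_subset_uIcc ht)

theorem HasDerivAt.div_rpow_const {N P : ℝ → ℝ} {n p x : ℝ} (a : ℝ) (hN : HasDerivAt N n x)
    (hP : HasDerivAt P p x) (hPx : 0 < P x) :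
    HasDerivAt (fun y => N y / P y ^ a) ((n * P x - a * N x * p) / P x ^ (a + 1)) x := by
  have hPa : P x ^ a ≠ 0 := (rpow_pos_of_pos hPx a).ne'
  refine (hN.div (hP.rpow_const (p := a) (Or.inl hPx.ne')) hPa).congr_deriv ?_
  rw [rpow_sub_one hPx.ne', rpow_add_one hPx.ne']
  field_simp

/-- Jacobi's delta amplitude. -/
noncomputable def deltaAmp (k t : ℝ) : ℝ := √(1 - k ^ 2 * sin t ^ 2)

section modulus

variable {k : ℝ}

theorem abs_lt_one_of_mem_ball (hk : k ∈ Metric.ball (0 : ℝ) 1) : |k| < 1 := by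
  simpa using hk

theorem abs_lt_one_of_mem_Ioo (hk : k ∈ Ioo (0 : ℝ) 1) : |k| < 1 :=
  abs_lt.2 ⟨by linarith [hk.1], hk.2⟩

theorem one_sub_sq_pos_of_abs_lt_one (hk : |k| < 1) : 0 < 1 - k ^ 2 := by
  linarith [(sq_lt_one_iff_abs_lt_one k).2 hk]

theorem one_sub_sq_mul_sin_sq_pos (hk : |k| < 1) (t : ℝ) : 0 < 1 - k ^ 2 * sin t ^ 2 := by
  nlinarith [sin_sq_le_one t, sq_nonneg k, one_sub_sq_pos_of_abs_lt_one hk]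

theorem E_eq_integral_deltaAmp (k : ℝ) : E k = ∫ t in (0)..(π / 2), deltaAmp k t := rfl

theorem continuous_deltaAmp : Continuous (Function.uncurry deltaAmp) := by
  unfold Function.uncurry deltaAmp
  fun_prop

theorem continuous_deltaAmp_amplitude (k : ℝ) : Continuous (deltaAmp k) :=
  continuous_deltaAmp.comp (Continuous.prodMk_right k)

theorem deltaAmp_pos (hk : |k| < 1) (t : ℝ) : 0 < deltaAmp k t :=
  sqrt_pos.2 (one_sub_sq_mul_sin_sq_pos hk t)

theorem deltaAmp_sq (hk : |k| < 1) (t : ℝ) : deltaAmp k t ^ 2 = 1 - k ^ 2 * sin t ^ 2 :=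
  sq_sqrt (one_sub_sq_mul_sin_sq_pos hk t).le

theorem deltaAmp_le_one (k t : ℝ) : deltaAmp k t ≤ 1 :=
  sqrt_le_one.2 (by nlinarith [sq_nonneg (k * sin t)])

theorem continuous_inv_deltaAmp_pow (hk : |k| < 1) (n : ℕ) :
    Continuous fun t => 1 / deltaAmp k t ^ n :=
  continuous_const.div ((continuous_deltaAmp_amplitude k).pow n)
    fun t => pow_ne_zero n (deltaAmp_pos hk t).ne'

theorem continuous_inv_deltaAmp (hk : |k| < 1) : Continuous fun t => 1 / deltaAmp k t := by
  simpa only [pow_one] using continuous_inv_deltaAmp_pow hk 1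

theorem hasDerivAt_deltaAmp_modulus (hk : |k| < 1) (t : ℝ) :
    HasDerivAt (deltaAmp · t) (-(k * sin t ^ 2) / deltaAmp k t) k := by
  have h := (((hasDerivAt_pow 2 k).mul_const (sin t ^ 2)).const_sub 1).sqrt
    (one_sub_sq_mul_sin_sq_pos hk t).ne'
  refine h.congr_deriv ?_
  unfold deltaAmp
  field_simp
  ring

theorem hasDerivAt_inv_deltaAmp_modulus (hk : |k| < 1) (t : ℝ) :
    HasDerivAt (fun x => 1 / deltaAmp x t) (k * sin t ^ 2 / deltaAmp k t ^ 3) k := by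
  have hΔ := (deltaAmp_pos hk t).ne'
  refine ((hasDerivAt_const k 1).div (hasDerivAt_deltaAmp_modulus hk t) hΔ).congr_deriv ?_
  field_simp
  ring

theorem hasDerivAt_deltaAmp_amplitude (hk : |k| < 1) (t : ℝ) :
    HasDerivAt (deltaAmp k) (-(k ^ 2 * sin t * cos t) / deltaAmp k t) t := by
  have h := ((((hasDerivAt_sin t).fun_pow 2).const_mul (k ^ 2)).const_sub 1).sqrt
    (one_sub_sq_mul_sin_sq_pos hk t).ne'
  refine h.congr_deriv ?_
  unfold deltaAmp
  field_simp
  ring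

theorem integral_inv_deltaAmp_pow_three (hk : |k| < 1) :
    ∫ t in (0)..(π / 2), 1 / deltaAmp k t ^ 3 = E k / (1 - k ^ 2) := by
  have hk2 := one_sub_sq_pos_of_abs_lt_one hk
  have hcontΔ := continuous_deltaAmp_amplitude k
  have hcont3 : Continuous fun t => (1 - k ^ 2) * (1 / deltaAmp k t ^ 3) :=
    continuous_const.mul (continuous_inv_deltaAmp_pow hk 3)
  have hprim : ∀ t, HasDerivAt (fun t => k ^ 2 * (sin t * cos t / deltaAmp k t))
      (deltaAmp k t - (1 - k ^ 2) * (1 / deltaAmp k t ^ 3)) t := by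
    intro t
    have hΔ := deltaAmp_pos hk t
    have h := (((hasDerivAt_sin t).fun_mul (hasDerivAt_cos t)).div
      (hasDerivAt_deltaAmp_amplitude hk t) hΔ.ne').const_mul (k ^ 2)
    refine h.congr_deriv ?_
    have hsq := deltaAmp_sq hk t
    field_simp
    linear_combination (k ^ 2 - k ^ 2 * sin t ^ 2 - 1 - deltaAmp k t ^ 2) * hsq
      + (k ^ 2 * deltaAmp k t ^ 2 + k ^ 4 * sin t ^ 2) * sin_sq_add_cos_sq t
  have hftc := intervalIntegral.integral_eq_sub_of_hasDerivAt (fun t _ => hprim t)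
    ((hcontΔ.sub hcont3).intervalIntegrable 0 (π / 2))
  rw [intervalIntegral.integral_sub (hcontΔ.intervalIntegrable _ _)
    (hcont3.intervalIntegrable _ _),
    intervalIntegral.integral_const_mul, ← E_eq_integral_deltaAmp] at hftc
  simp only [sin_pi_div_two, cos_pi_div_two, sin_zero, mul_zero, zero_mul, zero_div,
    sub_zero] at hftc
  field_simp
  linarith

theorem hasDerivAt_E (hk : |k| < 1) (hk0 : k ≠ 0) : HasDerivAt E ((E k - K k) / k) k := by
  have hF' : ContinuousOn (Function.uncurry fun x t => -(x * sin t ^ 2) / deltaAmp x t)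
      (Metric.ball 0 1 ×ˢ [[0, π / 2]]) :=
    (Continuous.continuousOn (by fun_prop)).div continuous_deltaAmp.continuousOn
      fun p hp => (deltaAmp_pos (abs_lt_one_of_mem_ball hp.1) p.2).ne'
  have h := hasDerivAt_intervalIntegral_of_continuousOn Metric.isOpen_ball (by simpa using hk)
    (fun x _ => (continuous_deltaAmp_amplitude x).continuousOn) hF'
    fun x hx t _ => hasDerivAt_deltaAmp_modulus (abs_lt_one_of_mem_ball hx) t
  refine h.congr_deriv ?_
  have hpt : ∀ t ∈ [[0, π / 2]],
      -(k * sin t ^ 2) / deltaAmp k t = (deltaAmp k t - 1 / deltaAmp k t) / k := by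
    intro t _
    have hΔ := (deltaAmp_pos hk t).ne'
    field_simp
    linear_combination -(deltaAmp_sq hk t)
  rw [intervalIntegral.integral_congr hpt, intervalIntegral.integral_div,
    intervalIntegral.integral_sub ((continuous_deltaAmp_amplitude k).intervalIntegrable _ _)
    ((continuous_inv_deltaAmp hk).intervalIntegrable _ _)]
  rfl

theorem hasDerivAt_K (hk : |k| < 1) (hk0 : k ≠ 0) :
    HasDerivAt K ((E k / (1 - k ^ 2) - K k) / k) k := by
  have hF : ∀ x ∈ Metric.ball (0 : ℝ) 1, ContinuousOn (fun t => 1 / deltaAmp x t) [[0, π / 2]] :=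
    fun x hx => (continuous_inv_deltaAmp (abs_lt_one_of_mem_ball hx)).continuousOn
  have hF' : ContinuousOn (Function.uncurry fun x t => x * sin t ^ 2 / deltaAmp x t ^ 3)
      (Metric.ball 0 1 ×ˢ [[0, π / 2]]) :=
    (Continuous.continuousOn (by fun_prop)).div (continuous_deltaAmp.pow 3).continuousOn
      fun p hp => pow_ne_zero 3 (deltaAmp_pos (abs_lt_one_of_mem_ball hp.1) p.2).ne'
  have h := hasDerivAt_intervalIntegral_of_continuousOn Metric.isOpen_ball (by simpa using hk)
    hF hF' fun x hx t _ => hasDerivAt_inv_deltaAmp_modulus (abs_lt_one_of_mem_ball hx) t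
  refine h.congr_deriv ?_
  have hpt : ∀ t ∈ [[0, π / 2]],
      k * sin t ^ 2 / deltaAmp k t ^ 3 = (1 / deltaAmp k t ^ 3 - 1 / deltaAmp k t) / k := by
    intro t _
    have hΔ := (deltaAmp_pos hk t).ne'
    field_simp
    linear_combination deltaAmp_sq hk t
  rw [intervalIntegral.integral_congr hpt, intervalIntegral.integral_div,
    intervalIntegral.integral_sub ((continuous_inv_deltaAmp_pow hk 3).intervalIntegrable _ _)
    ((continuous_inv_deltaAmp hk).intervalIntegrable _ _), integral_inv_deltaAmp_pow_three hk]
  rfl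

theorem E_pos (hk : |k| < 1) : 0 < E k :=
  intervalIntegral.intervalIntegral_pos_of_pos_on
    ((continuous_deltaAmp_amplitude k).intervalIntegrable _ _) (fun t _ => deltaAmp_pos hk t)
    (by positivity)

theorem E_le_K (hk : |k| < 1) : E k ≤ K k := by
  refine intervalIntegral.integral_mono_on (by positivity)
    ((continuous_deltaAmp_amplitude k).intervalIntegrable _ _)
    ((continuous_inv_deltaAmp hk).intervalIntegrable _ _) fun t _ => ?_
  change deltaAmp k t ≤ 1 / deltaAmp k t
  rw [le_div_iff₀ (deltaAmp_pos hk t)]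
  nlinarith [deltaAmp_le_one k t, deltaAmp_pos hk t]

theorem hasDerivAt_ι₁ (hk : |k| < 1) (hk0 : k ≠ 0) :
    HasDerivAt ι₁ ((ι₁ k - E k / (1 - k ^ 2)) / k) k := by
  have hk2 := (one_sub_sq_pos_of_abs_lt_one hk).ne'
  refine (((hasDerivAt_E hk hk0).const_mul 2).sub (hasDerivAt_K hk hk0)).congr_deriv ?_
  unfold ι₁
  field_simp
  ring

theorem hasDerivAt_ι₂ (hk : |k| < 1) (hk0 : k ≠ 0) :
    HasDerivAt ι₂ (k * E k / (1 - k ^ 2)) k := by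
  have hk2 := (one_sub_sq_pos_of_abs_lt_one hk).ne'
  refine ((hasDerivAt_K hk hk0).sub (hasDerivAt_E hk hk0)).congr_deriv ?_
  field_simp
  ring

theorem ι₁_lt_E_div_one_sub_sq (hk : k ∈ Ioo 0 1) : ι₁ k < E k / (1 - k ^ 2) := by
  have habs := abs_lt_one_of_mem_Ioo hk
  have hE := E_pos habs
  calc ι₁ k ≤ E k := by unfold ι₁; linarith [E_le_K habs]
    _ < E k / (1 - k ^ 2) := by
      rw [lt_div_iff₀ (one_sub_sq_pos_of_abs_lt_one habs)]
      nlinarith [mul_pos hE (pow_pos hk.1 2)]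

theorem strictAntiOn_ι₁ : StrictAntiOn ι₁ (Ioo 0 1) := by
  have hderiv : ∀ k ∈ Ioo (0 : ℝ) 1, HasDerivAt ι₁ ((ι₁ k - E k / (1 - k ^ 2)) / k) k :=
    fun k hk => hasDerivAt_ι₁ (abs_lt_one_of_mem_Ioo hk) hk.1.ne'
  refine strictAntiOn_of_deriv_neg (convex_Ioo 0 1)
    (fun k hk => (hderiv k hk).continuousAt.continuousWithinAt) fun k hk => ?_
  rw [interior_Ioo] at hk
  rw [(hderiv k hk).deriv]
  exact div_neg_of_neg_of_pos (sub_neg.2 (ι₁_lt_E_div_one_sub_sq hk)) hk.1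

theorem ι₁_pos_of_lt_root {k₀ : ℝ} (hk₀ : k₀ < 1) (hroot : ι₁ k₀ = 0) (hk : k ∈ Ioo 0 k₀) :
    0 < ι₁ k :=
  hroot ▸ strictAntiOn_ι₁ ⟨hk.1, hk.2.trans hk₀⟩ ⟨hk.1.trans hk.2, hk₀⟩ hk.2

theorem ι₃_eq (k : ℝ) :
    ι₃ k = ((ι₂ k + 2 * k ^ 2 * ι₁ k) * E k - 2 * (1 - k ^ 2) * ι₁ k * ι₂ k) / (1 - k ^ 2) := by
  unfold ι₁ ι₂ ι₃
  ring

theorem hasDerivAt_ι₁_div_self (hk : |k| < 1) (hk0 : k ≠ 0) :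
    HasDerivAt (fun x => ι₁ x / x) (-E k / (k ^ 2 * (1 - k ^ 2))) k := by
  have hk2 := (one_sub_sq_pos_of_abs_lt_one hk).ne'
  refine ((hasDerivAt_ι₁ hk hk0).div (hasDerivAt_id' k) hk0).congr_deriv ?_
  field_simp
  ring

theorem hasDerivAt_sqrt_two_mul_ι₁_div_self (hk : k ∈ Ioo 0 1) (hι₁ : 0 < ι₁ k) :
    HasDerivAt (fun x => √(2 * ι₁ x / x)) (-E k / ((1 - k ^ 2) * √(2 * k ^ 3 * ι₁ k))) k := by
  have habs := abs_lt_one_of_mem_Ioo hk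
  have hk2 := one_sub_sq_pos_of_abs_lt_one habs
  have hq : 0 < 2 * (ι₁ k / k) := by have := hk.1; positivity
  have hsqrt : √(2 * k ^ 3 * ι₁ k) = k ^ 2 * √(2 * (ι₁ k / k)) := by
    rw [← sqrt_sq (by positivity : 0 ≤ k ^ 2), ← sqrt_mul (by positivity)]
    congr 1
    field_simp
  simp only [mul_div_assoc]
  refine (((hasDerivAt_ι₁_div_self habs hk.1.ne').const_mul 2).sqrt hq.ne').congr_deriv ?_
  rw [hsqrt]
  have := sqrt_pos.2 hq
  field_simp

theorem hasDerivAt_ι₂_add_div_rpow (hk : k ∈ Ioo 0 1) (hι₁ : 0 < ι₁ k) :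
    HasDerivAt (fun x => (ι₂ x + 4 * x ^ 2 * ι₁ x) / (3 * (2 * x * ι₁ x) ^ ((3 : ℝ) / 2)))
      (ι₃ k / (2 * k * ι₁ k) ^ ((5 : ℝ) / 2)) k := by
  have habs := abs_lt_one_of_mem_Ioo hk
  have hk0 := hk.1.ne'
  have hk2 := (one_sub_sq_pos_of_abs_lt_one habs).ne'
  have hP : 0 < 2 * k * ι₁ k := by have := hk.1; positivity
  have hι₁' := hasDerivAt_ι₁ habs hk0
  have hnum := (hasDerivAt_ι₂ habs hk0).fun_add (((hasDerivAt_pow 2 k).const_mul 4).fun_mul hι₁')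
  have hden := ((hasDerivAt_id' k).const_mul 2).fun_mul hι₁'
  simp only [div_mul_eq_div_div_swap]
  refine ((hnum.div_rpow_const (3 / 2) hden hP).div_const 3).congr_deriv ?_
  rw [show (3 : ℝ) / 2 + 1 = 5 / 2 by norm_num, ι₃_eq]
  have := (rpow_pos_of_pos hP ((5 : ℝ) / 2)).ne'
  field_simp
  ring

end modulus

/-- For every `k ∈ (0, k₀)`: (a) `k ↦ √(2ι₁(k)/k)` has derivative
`−E(k)/((1 − k²)·√(2k³ι₁(k)))` at `k`;
(b) `k ↦ (ι₂(k) + 4k²ι₁(k))/(3(2kι₁(k))^{3/2})` has derivative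
`ι₃(k)/(2kι₁(k))^{5/2}` at `k`. -/
theorem hasDerivAt_Y12_W12 (k₀ : ℝ) (hk₀ : k₀ ∈ Set.Ioo (0:ℝ) 1)
    (hroot : 2 * E k₀ - K k₀ = 0) :
    ∀ k ∈ Set.Ioo 0 k₀,
      HasDerivAt (fun x => Real.sqrt (2 * ι₁ x / x))
        (-(E k) / ((1 - k^2) * Real.sqrt (2 * k^3 * ι₁ k))) k ∧
      HasDerivAt (fun x => (ι₂ x + 4 * x^2 * ι₁ x) / (3 * (2 * x * ι₁ x) ^ ((3:ℝ)/2)))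
        (ι₃ k / (2 * k * ι₁ k) ^ ((5:ℝ)/2)) k := by
  intro k hk
  have hk1 : k ∈ Ioo 0 1 := ⟨hk.1, hk.2.trans hk₀.2⟩
  have hι₁ : 0 < ι₁ k := ι₁_pos_of_lt_root hk₀.2 hroot hk
  exact ⟨hasDerivAt_sqrt_two_mul_ι₁_div_self hk1 hι₁, hasDerivAt_ι₂_add_div_rpow hk1 hι₁⟩
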